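/- For every x ∈ ℝ^n, the map F is differentiable at x and its Jacobian matrix is given by (dF/dx)(x) = diag(1 ⊘ (K(b ⊘ (K^T e^x)))) · K · diag(b ⊘ (K^T e^x)^2) · K^T · diag(e^x), where (K^T e^x)^2 denotes the entrywise square. Moreover this equals diag(e^{F(x)}) · diag(1 ⊘ (a ⊙ e^x)) · P(x) · diag(1 ⊘ b) · P(x)^T, where ⊙ denotes the entrywise product. -/

import Mathlib

/-!
`F` is the composite `x ↦ eˣ ↦ Kᵀeˣ ↦ b ⊘ Kᵀeˣ ↦ K(b ⊘ Kᵀeˣ) ↦ log a − log K(b ⊘ Kᵀeˣ)`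
of linear maps and componentwise maps, whose Jacobians are `K`, `Kᵀ` and diagonal matrices, so
the chain rule gives the first formula (the derivatives of `t ↦ b / t` and of `− log` contribute
one sign each). The second form follows from `P(x) = diag(eˣ) K diag(b ⊘ Kᵀeˣ)` and
`e^{F(x)} = a ⊘ K(b ⊘ Kᵀeˣ)`.
-/

open Finset Matrix

section ChainRule

variable {𝕜 ι κ μ : Type*} [NontriviallyNormedField 𝕜] [CompleteSpace 𝕜] [Fintype ι]

theorem hasFDerivAt_pi_map [DecidableEq ι] {f : ι → 𝕜 → 𝕜} {f' x : ι → 𝕜}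
    (hf : ∀ i, HasDerivAt (f i) (f' i) (x i)) :
    HasFDerivAt (fun y i => f i (y i)) (mulVecLin (diagonal f')).toContinuousLinearMap x := by
  refine hasFDerivAt_pi'.2 fun i => ?_
  refine ((hf i).hasFDerivAt.comp x
    (hasFDerivAt_apply (𝕜 := 𝕜) (F' := fun _ => 𝕜) i x)).congr_fderiv ?_
  ext v
  simp [mulVec_diagonal, mul_comm]

variable [Fintype κ] [Fintype μ]

theorem HasFDerivAt.comp_mulVecLin {f : (ι → 𝕜) → κ → 𝕜} {g : (κ → 𝕜) → μ → 𝕜}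
    {A : Matrix μ κ 𝕜} {B : Matrix κ ι 𝕜} {x : ι → 𝕜}
    (hg : HasFDerivAt g (mulVecLin A).toContinuousLinearMap (f x))
    (hf : HasFDerivAt f (mulVecLin B).toContinuousLinearMap x) :
    HasFDerivAt (g ∘ f) (mulVecLin (A * B)).toContinuousLinearMap x := by
  rw [mulVecLin_mul]
  exact hg.comp x hf

end ChainRule

theorem Matrix.mulVec_pos {ι κ : Type*} [Fintype κ] [Nonempty κ] {K : Matrix ι κ ℝ}
    (hK : ∀ i j, 0 < K i j) {v : κ → ℝ} (hv : ∀ j, 0 < v j) (i : ι) : 0 < (K *ᵥ v) i :=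
  sum_pos (fun j _ => mul_pos (hK i j) (hv j)) univ_nonempty

section Sinkhorn

variable {ι κ : Type*} [Fintype ι] [Fintype κ] [DecidableEq ι] [DecidableEq κ]
  (a : ι → ℝ) (b : κ → ℝ) (K : Matrix ι κ ℝ)

noncomputable def sinkhornMap (x : ι → ℝ) : ι → ℝ :=
  fun i => Real.log (a i) - Real.log ((K *ᵥ (b / (Kᵀ *ᵥ (Real.exp ∘ x)))) i)

noncomputable def sinkhornPlan (x : ι → ℝ) : Matrix ι κ ℝ :=
  diagonal (Real.exp ∘ x) * K * diagonal (b / (Kᵀ *ᵥ (Real.exp ∘ x)))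

variable {a b K}

theorem sinkhornPlan_apply (x : ι → ℝ) (i : ι) (j : κ) :
    sinkhornPlan b K x i j = Real.exp (x i) * K i j * (b j / (Kᵀ *ᵥ (Real.exp ∘ x)) j) := by
  simp [sinkhornPlan, diagonal_mul, mul_diagonal]

theorem hasFDerivAt_sinkhornMap [Nonempty ι] [Nonempty κ] (hb : ∀ j, 0 < b j)
    (hK : ∀ i j, 0 < K i j) (x : ι → ℝ) :
    HasFDerivAt (sinkhornMap a b K) (mulVecLin
      (diagonal (1 / (K *ᵥ (b / (Kᵀ *ᵥ (Real.exp ∘ x))))) * K *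
        diagonal (b / (Kᵀ *ᵥ (Real.exp ∘ x)) ^ 2) * Kᵀ *
        diagonal (Real.exp ∘ x))).toContinuousLinearMap x := by
  set s := Kᵀ *ᵥ (Real.exp ∘ x)
  set v := K *ᵥ (b / s)
  have hs : ∀ j, 0 < s j := mulVec_pos (fun j i => hK i j) fun i => Real.exp_pos (x i)
  have hv : ∀ i, 0 < v i := mulVec_pos hK fun j => div_pos (hb j) (hs j)
  have hexp : HasFDerivAt (fun y i => Real.exp (y i))
      (mulVecLin (diagonal (Real.exp ∘ x))).toContinuousLinearMap x :=
    hasFDerivAt_pi_map fun i => Real.hasDerivAt_exp (x i)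
  have hdiv : HasFDerivAt (fun t j => b j / t j)
      (mulVecLin (diagonal fun j => -(b j / s j ^ 2))).toContinuousLinearMap s := by
    refine hasFDerivAt_pi_map fun j => ?_
    exact ((hasDerivAt_const (s j) (b j)).fun_div (hasDerivAt_id' (s j)) (hs j).ne').congr_deriv
      (by ring)
  have hlog : HasFDerivAt (fun w i => Real.log (a i) - Real.log (w i))
      (mulVecLin (diagonal fun i => -(v i)⁻¹)).toContinuousLinearMap v :=
    hasFDerivAt_pi_map fun i => by
      simpa using (Real.hasDerivAt_log (hv i).ne').const_sub (Real.log (a i))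
  refine (hlog.comp_mulVecLin <| (mulVecLin K).toContinuousLinearMap.hasFDerivAt.comp_mulVecLin <|
    hdiv.comp_mulVecLin <|
      (mulVecLin Kᵀ).toContinuousLinearMap.hasFDerivAt.comp_mulVecLin hexp).congr_fderiv ?_
  simp only [← diagonal_neg, one_div, Matrix.neg_mul, Matrix.mul_neg, neg_neg, Matrix.mul_assoc]
  rfl

theorem sinkhornMap_jacobian_eq [Nonempty ι] [Nonempty κ] (ha : ∀ i, 0 < a i)
    (hb : ∀ j, 0 < b j) (hK : ∀ i j, 0 < K i j) (x : ι → ℝ) :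
    diagonal (1 / (K *ᵥ (b / (Kᵀ *ᵥ (Real.exp ∘ x))))) * K *
        diagonal (b / (Kᵀ *ᵥ (Real.exp ∘ x)) ^ 2) * Kᵀ * diagonal (Real.exp ∘ x) =
      diagonal (Real.exp ∘ sinkhornMap a b K x) * diagonal (1 / (a * Real.exp ∘ x)) *
        sinkhornPlan b K x * diagonal (1 / b) * (sinkhornPlan b K x)ᵀ := by
  set s := Kᵀ *ᵥ (Real.exp ∘ x)
  set v := K *ᵥ (b / s)
  have hs : ∀ j, 0 < s j := mulVec_pos (fun j i => hK i j) fun i => Real.exp_pos (x i)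
  have hv : ∀ i, 0 < v i := mulVec_pos hK fun j => div_pos (hb j) (hs j)
  have hexpF : Real.exp ∘ sinkhornMap a b K x = a / v := funext fun i => by
    simp [sinkhornMap, Real.exp_sub, Real.exp_log (ha i), Real.exp_log (hv i), v, s]
  have hleft : diagonal (a / v) * diagonal (1 / (a * Real.exp ∘ x)) * diagonal (Real.exp ∘ x) =
      diagonal (1 / v) := by
    rw [diagonal_mul_diagonal, diagonal_mul_diagonal]
    congr 1; funext i
    have := (ha i).ne'; have := (hv i).ne'; have := Real.exp_pos (x i)
    simp only [Pi.div_apply, Pi.one_apply, Pi.mul_apply, Function.comp_apply, one_div,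
      _root_.mul_inv_rev]
    field_simp
  have hmid : diagonal (b / s) * diagonal (1 / b) * diagonal (b / s) = diagonal (b / s ^ 2) := by
    rw [diagonal_mul_diagonal, diagonal_mul_diagonal]
    congr 1; funext j
    have := (hb j).ne'; have := (hs j).ne'
    simp only [Pi.div_apply, Pi.one_apply, one_div, Pi.pow_apply]
    field_simp
  rw [hexpF, sinkhornPlan, transpose_mul, transpose_mul, diagonal_transpose, diagonal_transpose,
    ← hleft, ← hmid]
  simp only [Matrix.mul_assoc]
  rfl

end Sinkhorn

theorem jacobian_of_sinkhorn_map_general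
    (n m : ℕ) (hn : 0 < n) (hm : 0 < m)
    (a : Fin n → ℝ) (b : Fin m → ℝ) (K : Matrix (Fin n) (Fin m) ℝ)
    (ha_pos : ∀ i, 0 < a i)
    (hb_pos : ∀ j, 0 < b j)
    (hK_pos : ∀ i j, 0 < K i j)
    (F : (Fin n → ℝ) → Fin n → ℝ)
    (hF : ∀ x i, F x i = Real.log (a i) -
      Real.log (∑ j, K i j * (b j / ∑ i', K i' j * Real.exp (x i'))))
    (P : (Fin n → ℝ) → Matrix (Fin n) (Fin m) ℝ)
    (hP : ∀ x i j, P x i j =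
      Real.exp (x i) * K i j * (b j / ∑ i', K i' j * Real.exp (x i'))) :
    ∀ x : Fin n → ℝ,
      HasFDerivAt F
        (LinearMap.toContinuousLinearMap (Matrix.mulVecLin
          (Matrix.diagonal (fun i =>
              1 / (∑ j, K i j * (b j / ∑ i', K i' j * Real.exp (x i')))) *
            K *
            Matrix.diagonal (fun j =>
              b j / (∑ i', K i' j * Real.exp (x i')) ^ 2) *
            Kᵀ *
            Matrix.diagonal (fun i => Real.exp (x i))))) x ∧
      (Matrix.diagonal (fun i =>
          1 / (∑ j, K i j * (b j / ∑ i', K i' j * Real.exp (x i')))) *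
        K *
        Matrix.diagonal (fun j => b j / (∑ i', K i' j * Real.exp (x i')) ^ 2) *
        Kᵀ *
        Matrix.diagonal (fun i => Real.exp (x i)))
      = Matrix.diagonal (fun i => Real.exp (F x i)) *
        Matrix.diagonal (fun i => 1 / (a i * Real.exp (x i))) *
        P x *
        Matrix.diagonal (fun j => 1 / b j) *
        (P x)ᵀ := by
  have : Nonempty (Fin n) := Fin.pos_iff_nonempty.mp hn
  have : Nonempty (Fin m) := Fin.pos_iff_nonempty.mp hm
  obtain rfl : F = sinkhornMap a b K := funext fun x => funext (hF x)
  obtain rfl : P = sinkhornPlan b K :=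
    funext fun x => Matrix.ext fun i j => (hP x i j).trans (sinkhornPlan_apply x i j).symm
  exact fun x => ⟨hasFDerivAt_sinkhornMap hb_pos hK_pos x,
    sinkhornMap_jacobian_eq ha_pos hb_pos hK_pos x⟩

/-- Expression of the Jacobian of the Sinkhorn map `F`: `F` is differentiable at every
`x` with Jacobian matrix
`diag(1 ⊘ (K(b ⊘ Kᵀeˣ))) * K * diag(b ⊘ (Kᵀeˣ)²) * Kᵀ * diag(eˣ)`, which moreover
equals `diag(e^{F x}) * diag(1 ⊘ (a ⊙ eˣ)) * P(x) * diag(1 ⊘ b) * P(x)ᵀ`. -/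
theorem jacobian_of_sinkhorn_map
    (n m : ℕ) (hn : 0 < n) (hm : 0 < m)
    (a : Fin n → ℝ) (b : Fin m → ℝ) (K : Matrix (Fin n) (Fin m) ℝ)
    (ha_pos : ∀ i, 0 < a i) (ha_sum : ∑ i, a i = 1)
    (hb_pos : ∀ j, 0 < b j) (hb_sum : ∑ j, b j = 1)
    (hK_pos : ∀ i j, 0 < K i j)
    (F : (Fin n → ℝ) → Fin n → ℝ)
    (hF : ∀ x i, F x i = Real.log (a i) -
      Real.log (∑ j, K i j * (b j / ∑ i', K i' j * Real.exp (x i'))))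
    (P : (Fin n → ℝ) → Matrix (Fin n) (Fin m) ℝ)
    (hP : ∀ x i j, P x i j =
      Real.exp (x i) * K i j * (b j / ∑ i', K i' j * Real.exp (x i'))) :
    ∀ x : Fin n → ℝ,
      HasFDerivAt F
        (LinearMap.toContinuousLinearMap (Matrix.mulVecLin
          (Matrix.diagonal (fun i =>
              1 / (∑ j, K i j * (b j / ∑ i', K i' j * Real.exp (x i')))) *
            K *
            Matrix.diagonal (fun j =>
              b j / (∑ i', K i' j * Real.exp (x i')) ^ 2) *
            Kᵀ *
            Matrix.diagonal (fun i => Real.exp (x i))))) x ∧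
      (Matrix.diagonal (fun i =>
          1 / (∑ j, K i j * (b j / ∑ i', K i' j * Real.exp (x i')))) *
        K *
        Matrix.diagonal (fun j => b j / (∑ i', K i' j * Real.exp (x i')) ^ 2) *
        Kᵀ *
        Matrix.diagonal (fun i => Real.exp (x i)))
      = Matrix.diagonal (fun i => Real.exp (F x i)) *
        Matrix.diagonal (fun i => 1 / (a i * Real.exp (x i))) *
        P x *
        Matrix.diagonal (fun j => 1 / b j) *
        (P x)ᵀ :=
  jacobian_of_sinkhorn_map_general n m hn hm a b K ha_pos hb_pos hK_pos F hF P hP
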